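/- Pre-Iwasawa factorization: Let S = [[A, B], [C, D]] ∈ Sp(2d, ℝ), set X = (AAᵀ + BBᵀ)⁻¹, Y = -(CAᵀ + DBᵀ)X, P = X^{1/2}A, Q = X^{1/2}B, where X^{1/2} is the positive definite square root of X. Then S = [[I, 0], [-Y, I]] · [[X^{-1/2}, 0], [0, X^{1/2}]] · [[P, Q], [-Q, P]], and each of the three factors is symplectic. -/
import Mathlib


open Matrix

theorem stmt_13 (d : ℕ) (A B C D : Matrix (Fin d) (Fin d) ℝ)
    (J : Matrix (Fin d ⊕ Fin d) (Fin d ⊕ Fin d) ℝ)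
    (hJ : J = fromBlocks 0 1 (-1) 0)
    (hS : (fromBlocks A B C D)ᵀ * J * (fromBlocks A B C D) = J)
    (R : Matrix (Fin d) (Fin d) ℝ) (hR : R.PosDef)
    (hRR : R * R = (A * Aᵀ + B * Bᵀ)⁻¹) :
    fromBlocks A B C D =
      (fromBlocks 1 0 (-(-((C * Aᵀ + D * Bᵀ) * (A * Aᵀ + B * Bᵀ)⁻¹))) 1) *
      (fromBlocks R⁻¹ 0 0 R) *
      (fromBlocks (R * A) (R * B) (-(R * B)) (R * A)) ∧
    (fromBlocks 1 0 (-(-((C * Aᵀ + D * Bᵀ) * (A * Aᵀ + B * Bᵀ)⁻¹))) 1)ᵀ * J *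
      (fromBlocks 1 0 (-(-((C * Aᵀ + D * Bᵀ) * (A * Aᵀ + B * Bᵀ)⁻¹))) 1) = J ∧
    (fromBlocks R⁻¹ 0 0 R)ᵀ * J * (fromBlocks R⁻¹ 0 0 R) = J ∧
    (fromBlocks (R * A) (R * B) (-(R * B)) (R * A))ᵀ * J *
      (fromBlocks (R * A) (R * B) (-(R * B)) (R * A)) = J := by
  rw [hJ] at hS ⊢
  -- basic facts about R and M := A*Aᵀ + B*Bᵀ
  have hRt : Rᵀ = R := hR.isHermitian.eq
  have hRu : IsUnit R := hR.isUnit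
  have hRdet : IsUnit R.det := (isUnit_iff_isUnit_det R).mp hRu
  have hRRi : R * R⁻¹ = 1 := mul_nonsing_inv R hRdet
  have hRiR : R⁻¹ * R = 1 := nonsing_inv_mul R hRdet
  have hMu : IsUnit (A * Aᵀ + B * Bᵀ) := by
    rw [← Matrix.isUnit_nonsing_inv_iff, ← hRR]
    exact hRu.mul hRu
  have hMdet : IsUnit (A * Aᵀ + B * Bᵀ).det := (isUnit_iff_isUnit_det _).mp hMu
  have hMMi : (A * Aᵀ + B * Bᵀ) * (A * Aᵀ + B * Bᵀ)⁻¹ = 1 := mul_nonsing_inv _ hMdet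
  have hMiM : (A * Aᵀ + B * Bᵀ)⁻¹ * (A * Aᵀ + B * Bᵀ) = 1 := nonsing_inv_mul _ hMdet
  have hMt : (A * Aᵀ + B * Bᵀ)ᵀ = A * Aᵀ + B * Bᵀ := by
    simp [transpose_add, transpose_mul]
  have hMit : ((A * Aᵀ + B * Bᵀ)⁻¹)ᵀ = (A * Aᵀ + B * Bᵀ)⁻¹ := by
    rw [transpose_nonsing_inv, hMt]
  -- column relations from hS
  have hS0 := hS
  rw [fromBlocks_transpose, fromBlocks_multiply, fromBlocks_multiply] at hS
  simp only [Matrix.mul_zero, Matrix.mul_one, Matrix.zero_mul, Matrix.one_mul, Matrix.mul_neg,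
    Matrix.neg_mul, zero_add, add_zero, neg_zero] at hS
  rw [fromBlocks_inj] at hS
  obtain ⟨h1, h2, h3, h4⟩ := hS
  rw [neg_add_eq_sub] at h1 h2 h3 h4
  have hca : Cᵀ * A = Aᵀ * C := (sub_eq_zero.mp h1).symm
  have hdb : Dᵀ * B = Bᵀ * D := (sub_eq_zero.mp h4).symm
  have hcb : Cᵀ * B = Aᵀ * D - 1 := by rw [← h2]; abel
  have hda : Dᵀ * A = 1 + Bᵀ * C := by
    rw [sub_eq_iff_eq_add] at h3; rw [h3]; abel
  -- row relations via the symplectic group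
  have hJm : (Matrix.J (Fin d) ℝ) = -(fromBlocks 0 1 (-1) 0 : Matrix _ _ ℝ) := by
    rw [Matrix.J, fromBlocks_neg]
    norm_num
  have hmem : fromBlocks A B C D ∈ symplecticGroup (Fin d) ℝ := by
    rw [SymplecticGroup.mem_iff', hJm]
    simp only [Matrix.mul_neg, Matrix.neg_mul, neg_inj]
    exact hS0
  have hrow := SymplecticGroup.mem_iff.mp hmem
  rw [Matrix.J, fromBlocks_transpose, fromBlocks_multiply, fromBlocks_multiply] at hrow
  simp only [Matrix.mul_zero, Matrix.mul_one, Matrix.zero_mul, Matrix.one_mul, Matrix.mul_neg,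
    Matrix.neg_mul, zero_add, add_zero, neg_zero] at hrow
  rw [fromBlocks_inj] at hrow
  obtain ⟨he, -, -, -⟩ := hrow
  -- he should give A * Bᵀ = B * Aᵀ
  have hab : A * Bᵀ = B * Aᵀ := by
    rw [add_comm, neg_add_eq_sub] at he
    exact (sub_eq_zero.mp he).symm
  -- universally quantified versions
  have hcaX : ∀ X, Cᵀ * (A * X) = Aᵀ * (C * X) := fun X => by
    rw [← Matrix.mul_assoc, hca, Matrix.mul_assoc]
  have hdbX : ∀ X, Dᵀ * (B * X) = Bᵀ * (D * X) := fun X => by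
    rw [← Matrix.mul_assoc, hdb, Matrix.mul_assoc]
  have hcbX : ∀ X, Cᵀ * (B * X) = Aᵀ * (D * X) - X := fun X => by
    rw [← Matrix.mul_assoc, hcb, Matrix.sub_mul, Matrix.one_mul, Matrix.mul_assoc]
  have hdaX : ∀ X, Dᵀ * (A * X) = X + Bᵀ * (C * X) := fun X => by
    rw [← Matrix.mul_assoc, hda, Matrix.add_mul, Matrix.one_mul, Matrix.mul_assoc]
  have habX : ∀ X, A * (Bᵀ * X) = B * (Aᵀ * X) := fun X => by
    rw [← Matrix.mul_assoc, hab, Matrix.mul_assoc]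
  -- key algebraic identities
  have hKM : (A * Cᵀ + B * Dᵀ) * (A * Aᵀ + B * Bᵀ)
      = (A * Aᵀ + B * Bᵀ) * (C * Aᵀ + D * Bᵀ) := by
    simp only [Matrix.add_mul, Matrix.mul_add, Matrix.mul_assoc]
    rw [hcaX, hcbX, hdaX, hdbX]
    simp only [Matrix.mul_sub, Matrix.mul_add, hab]
    abel
  have hMC : (A * Aᵀ + B * Bᵀ) * C = (A * Cᵀ + B * Dᵀ) * A - B := by
    simp only [Matrix.add_mul, Matrix.mul_add, Matrix.mul_assoc]
    rw [hca, hda]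
    simp only [Matrix.mul_add, Matrix.mul_one]
    abel
  have hMD : (A * Aᵀ + B * Bᵀ) * D = (A * Cᵀ + B * Dᵀ) * B + A := by
    simp only [Matrix.add_mul, Matrix.mul_add, Matrix.mul_assoc]
    rw [hcb, hdb]
    simp only [Matrix.mul_sub, Matrix.mul_one]
    abel
  have hswap : (C * Aᵀ + D * Bᵀ) * (A * Aᵀ + B * Bᵀ)⁻¹
      = (A * Aᵀ + B * Bᵀ)⁻¹ * (A * Cᵀ + B * Dᵀ) := by
    calc (C * Aᵀ + D * Bᵀ) * (A * Aᵀ + B * Bᵀ)⁻¹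
        = ((A * Aᵀ + B * Bᵀ)⁻¹ * (A * Aᵀ + B * Bᵀ)) * ((C * Aᵀ + D * Bᵀ) * (A * Aᵀ + B * Bᵀ)⁻¹) := by
          rw [hMiM, Matrix.one_mul]
      _ = (A * Aᵀ + B * Bᵀ)⁻¹ * ((A * Cᵀ + B * Dᵀ) * (A * Aᵀ + B * Bᵀ)) * (A * Aᵀ + B * Bᵀ)⁻¹ := by
          rw [hKM]; simp only [Matrix.mul_assoc]
      _ = (A * Aᵀ + B * Bᵀ)⁻¹ * (A * Cᵀ + B * Dᵀ) * ((A * Aᵀ + B * Bᵀ) * (A * Aᵀ + B * Bᵀ)⁻¹) := by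
          simp only [Matrix.mul_assoc]
      _ = (A * Aᵀ + B * Bᵀ)⁻¹ * (A * Cᵀ + B * Dᵀ) := by rw [hMMi, Matrix.mul_one]
  have hZsym : ((C * Aᵀ + D * Bᵀ) * (A * Aᵀ + B * Bᵀ)⁻¹)ᵀ
      = (C * Aᵀ + D * Bᵀ) * (A * Aᵀ + B * Bᵀ)⁻¹ := by
    rw [transpose_mul, hMit, transpose_add, transpose_mul, transpose_mul,
      transpose_transpose, transpose_transpose, hswap]
  have hC' : (C * Aᵀ + D * Bᵀ) * (A * Aᵀ + B * Bᵀ)⁻¹ * A - (A * Aᵀ + B * Bᵀ)⁻¹ * B = C := by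
    rw [hswap, Matrix.mul_assoc, ← Matrix.mul_sub, ← hMC, ← Matrix.mul_assoc, hMiM,
      Matrix.one_mul]
  have hD' : (C * Aᵀ + D * Bᵀ) * (A * Aᵀ + B * Bᵀ)⁻¹ * B + (A * Aᵀ + B * Bᵀ)⁻¹ * A = D := by
    rw [hswap, Matrix.mul_assoc, ← Matrix.mul_add, ← hMD, ← Matrix.mul_assoc, hMiM,
      Matrix.one_mul]
  have hMRR : (A * Aᵀ + B * Bᵀ) * R * R = 1 := by rw [Matrix.mul_assoc, hRR, hMMi]
  have hRinvMR : R⁻¹ = (A * Aᵀ + B * Bᵀ) * R := inv_eq_left_inv hMRR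
  have hRMR : R * ((A * Aᵀ + B * Bᵀ) * R) = 1 := by rw [← hRinvMR, hRRi]
  refine ⟨?_, ?_, ?_, ?_⟩
  · -- factorization
    rw [fromBlocks_multiply, fromBlocks_multiply, fromBlocks_inj]
    simp only [neg_neg, Matrix.mul_zero, Matrix.mul_one, Matrix.zero_mul, Matrix.one_mul,
      Matrix.mul_neg, Matrix.neg_mul, zero_add, add_zero, neg_zero]
    refine ⟨?_, ?_, ?_, ?_⟩
    · rw [← Matrix.mul_assoc, hRiR, Matrix.one_mul]
    · rw [← Matrix.mul_assoc, hRiR, Matrix.one_mul]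
    · rw [Matrix.mul_assoc ((C * Aᵀ + D * Bᵀ) * (A * Aᵀ + B * Bᵀ)⁻¹) R⁻¹,
        ← Matrix.mul_assoc R⁻¹ R A, hRiR, Matrix.one_mul, ← Matrix.mul_assoc R R B, hRR,
        ← sub_eq_add_neg, hC']
    · rw [Matrix.mul_assoc ((C * Aᵀ + D * Bᵀ) * (A * Aᵀ + B * Bᵀ)⁻¹) R⁻¹,
        ← Matrix.mul_assoc R⁻¹ R B, hRiR, Matrix.one_mul, ← Matrix.mul_assoc R R A, hRR, hD']
  · -- first factor symplectic
    rw [fromBlocks_transpose, fromBlocks_multiply, fromBlocks_multiply, fromBlocks_inj]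
    simp only [neg_neg, transpose_one, transpose_zero, transpose_neg, Matrix.mul_zero,
      Matrix.mul_one, Matrix.zero_mul, Matrix.one_mul, Matrix.mul_neg, Matrix.neg_mul,
      zero_add, add_zero, neg_zero, hZsym]
    exact ⟨by abel, trivial, trivial, trivial⟩
  · -- second factor symplectic
    rw [fromBlocks_transpose, fromBlocks_multiply, fromBlocks_multiply, fromBlocks_inj]
    simp only [transpose_zero, Matrix.mul_zero,
      Matrix.mul_one, Matrix.zero_mul, Matrix.one_mul, Matrix.mul_neg, Matrix.neg_mul,
      zero_add, add_zero, neg_zero]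
    exact ⟨trivial, by rw [transpose_nonsing_inv, hRt, hRiR], by rw [hRt, hRRi], trivial⟩
  · -- third factor symplectic, via the symplectic group
    have hPP : (R * A) * (R * A)ᵀ + (R * B) * (R * B)ᵀ = 1 := by
      have h := hRMR
      simp only [Matrix.mul_add, Matrix.add_mul, Matrix.mul_assoc] at h
      simp only [transpose_mul, hRt, Matrix.mul_assoc]
      exact h
    have hPQ : (R * A) * (R * B)ᵀ = (R * B) * (R * A)ᵀ := by
      simp only [transpose_mul, hRt, Matrix.mul_assoc, habX]
    have hW : fromBlocks (R * A) (R * B) (-(R * B)) (R * A) ∈ symplecticGroup (Fin d) ℝ := by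
      rw [SymplecticGroup.mem_iff, Matrix.J, fromBlocks_transpose, fromBlocks_multiply,
        fromBlocks_multiply, fromBlocks_inj]
      simp only [transpose_neg, Matrix.mul_zero, Matrix.mul_one, Matrix.zero_mul,
        Matrix.one_mul, Matrix.mul_neg, Matrix.neg_mul, zero_add, add_zero, neg_zero, neg_neg]
      refine ⟨?_, ?_, ?_, ?_⟩
      · rw [hPQ]; abel
      · rw [← hPP]; abel
      · exact hPP
      · rw [hPQ]; abel
    have h4 := SymplecticGroup.mem_iff'.mp hW
    rw [hJm] at h4
    simp only [Matrix.mul_neg, Matrix.neg_mul, neg_inj] at h4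
    exact h4
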